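/- Let H be a 3-partite 3-graph with a matchable FR-partition (𝓕, 𝓡, W). Let a, b, c ∈ V(H) lie in three different vertex classes, and let S ⊆ W be a set of superfluous vertices with at most one vertex in each vertex class. Then ν(H − ({a, b, c} ∪ S)) = ν(H) in each of the following cases: (1) a ∈ V(𝓕) and b ∈ W; (2) a ∈ R for some R ∈ 𝓡, b ∉ R, and c ∉ V(𝓡); (3) a ∈ W is essential for some R ∈ 𝓡, b is not essential for R in H − S, and c ∉ V(𝓡); (4) a ∈ W is not essential in H − S and b ∉ V(𝓡). -/

import Mathlib

noncomputable section

attribute [local instance] Classical.propDecidable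

universe u

variable {α : Type u}

/-- A 3-partite 3-uniform multihypergraph: vertex classes `V1, V2, V3` and a
multiset of edges, each edge being a triple with one vertex in each class
(parallel edges are allowed via multiplicities). -/
structure TriSys (α : Type u) where
  V1 : Finset α
  V2 : Finset α
  V3 : Finset α
  h12 : Disjoint V1 V2
  h13 : Disjoint V1 V3
  h23 : Disjoint V2 V3
  edges : Multiset (α × α × α)
  mem1 : ∀ e ∈ edges, e.1 ∈ V1
  mem2 : ∀ e ∈ edges, e.2.1 ∈ V2
  mem3 : ∀ e ∈ edges, e.2.2 ∈ V3

/-- The vertex set of an edge. -/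
def evset (e : α × α × α) : Finset α := {e.1, e.2.1, e.2.2}

/-- The coordinates of an edge, indexed by `Fin 3`. -/
def ecoord (e : α × α × α) : Fin 3 → α := ![e.1, e.2.1, e.2.2]

namespace TriSys

def verts (H : TriSys α) : Finset α := H.V1 ∪ H.V2 ∪ H.V3

/-- The vertex classes, indexed by `Fin 3`. -/
def cls (H : TriSys α) : Fin 3 → Finset α := ![H.V1, H.V2, H.V3]

/-- A matching: a set of (pairwise vertex-disjoint) edges. -/
def IsMatching (H : TriSys α) (M : Finset (α × α × α)) : Prop :=
  (∀ e ∈ M, e ∈ H.edges) ∧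
  (↑M : Set (α × α × α)).Pairwise fun e f => Disjoint (evset e) (evset f)

/-- The matching number ν. -/
def nu (H : TriSys α) : ℕ :=
  sSup {n : ℕ | ∃ M : Finset (α × α × α), H.IsMatching M ∧ M.card = n}

/-- A vertex cover: a set of vertices meeting every edge. -/
def IsCover (H : TriSys α) (T : Finset α) : Prop :=
  ∀ e ∈ H.edges, ∃ v ∈ T, v ∈ evset e

/-- The vertex cover number τ. -/
def tau (H : TriSys α) : ℕ :=
  sInf {n : ℕ | ∃ T : Finset α, H.IsCover T ∧ T.card = n}

/-- Deletion of a set of vertices (and all edges meeting it). -/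
def delete (H : TriSys α) (S : Finset α) : TriSys α where
  V1 := H.V1 \ S
  V2 := H.V2 \ S
  V3 := H.V3 \ S
  h12 := H.h12.mono Finset.sdiff_subset Finset.sdiff_subset
  h13 := H.h13.mono Finset.sdiff_subset Finset.sdiff_subset
  h23 := H.h23.mono Finset.sdiff_subset Finset.sdiff_subset
  edges := H.edges.filter fun e => e.1 ∉ S ∧ e.2.1 ∉ S ∧ e.2.2 ∉ S
  mem1 := fun e he => by
    rw [Multiset.mem_filter] at he
    exact Finset.mem_sdiff.mpr ⟨H.mem1 e he.1, he.2.1⟩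
  mem2 := fun e he => by
    rw [Multiset.mem_filter] at he
    exact Finset.mem_sdiff.mpr ⟨H.mem2 e he.1, he.2.2.1⟩
  mem3 := fun e he => by
    rw [Multiset.mem_filter] at he
    exact Finset.mem_sdiff.mpr ⟨H.mem3 e he.1, he.2.2.2⟩

end TriSys

/-- The four edges of a truncated Fano plane on vertices `a,b,c,x,y,z`
(with classes `{a,x} ⊆ V1`, `{b,y} ⊆ V2`, `{c,z} ⊆ V3`). -/
def FanoEdges (a b c x y z : α) : Finset (α × α × α) :=
  {(a, b, c), (a, y, z), (x, b, z), (x, y, c)}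

/-- The supports of the edges of `H` induced on a vertex subset `F`. -/
def inducedEdges (H : TriSys α) (F : Finset α) : Finset (α × α × α) :=
  (H.edges.filter fun e => evset e ⊆ F).toFinset

/-- `H` induces a truncated multi-Fano plane on the six-element set `F`. -/
def IsMultiFano (H : TriSys α) (F : Finset α) : Prop :=
  ∃ a b c x y z : α,
    a ∈ H.V1 ∧ x ∈ H.V1 ∧ b ∈ H.V2 ∧ y ∈ H.V2 ∧ c ∈ H.V3 ∧ z ∈ H.V3 ∧
    a ≠ x ∧ b ≠ y ∧ c ≠ z ∧
    F = {a, b, c, x, y, z} ∧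
    inducedEdges H F = FanoEdges a b c x y z

/-- The data of an FR-partition: the families `𝓕` and `𝓡` and the set `W`. -/
structure FRData (α : Type u) where
  Ffam : Finset (Finset α)
  Rfam : Finset (Finset α)
  W : Finset α

/-- The union of the members of a family of sets. -/
def famUnion (G : Finset (Finset α)) : Finset α := G.biUnion id

/-- `(𝓕, 𝓡, W)` is an FR-partition of `H`. -/
def IsFRPartition (H : TriSys α) (P : FRData α) : Prop :=
  (∀ A ∈ P.Ffam, ∀ B ∈ P.Ffam, A ≠ B → Disjoint A B) ∧
  (∀ A ∈ P.Rfam, ∀ B ∈ P.Rfam, A ≠ B → Disjoint A B) ∧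
  (∀ A ∈ P.Ffam, ∀ B ∈ P.Rfam, Disjoint A B) ∧
  (∀ A ∈ P.Ffam, Disjoint A P.W) ∧
  (∀ B ∈ P.Rfam, Disjoint B P.W) ∧
  famUnion P.Ffam ∪ famUnion P.Rfam ∪ P.W = H.verts ∧
  (∀ A ∈ P.Ffam, IsMultiFano H A) ∧
  (∀ B ∈ P.Rfam, ∃ r1 ∈ H.V1, ∃ r2 ∈ H.V2, ∃ r3 ∈ H.V3, B = {r1, r2, r3}) ∧
  P.Ffam.card + P.Rfam.card = H.nu

/-- `w` is joined to `R` in the auxiliary bipartite graph `B_i`: some edge of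
`H` contains `w` and two vertices of `R`. -/
def RAdj (H : TriSys α) (R : Finset α) (w : α) : Prop :=
  ∃ e ∈ H.edges, w ∈ evset e ∧ 2 ≤ (evset e ∩ R).card

/-- The auxiliary bipartite graph on `Rfam` and `Wi` has a matching
saturating `Rfam`. -/
def SaturatingR (H : TriSys α) (Rfam : Finset (Finset α)) (Wi : Finset α) : Prop :=
  ∃ f : Finset α → α, Set.InjOn f ↑Rfam ∧ ∀ R ∈ Rfam, f R ∈ Wi ∧ RAdj H R (f R)

/-- Matchability of an FR-partition. -/
def IsMatchable (H : TriSys α) (P : FRData α) : Prop :=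
  ∀ i : Fin 3, SaturatingR H P.Rfam (P.W ∩ H.cls i)

/-- The edge-home property: every edge is an `F`-edge or an `R`-edge. -/
def EdgeHome (H : TriSys α) (P : FRData α) : Prop :=
  ∀ e ∈ H.edges,
    (∃ A ∈ P.Ffam, evset e ⊆ A) ∨ (∃ B ∈ P.Rfam, 2 ≤ (evset e ∩ B).card)

/-- A home-base partition: a matchable FR-partition with the edge-home
property. -/
def IsHomeBasePartition (H : TriSys α) (P : FRData α) : Prop :=
  IsFRPartition H P ∧ IsMatchable H P ∧ EdgeHome H P

/-- A home-base hypergraph: one admitting a home-base partition. -/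
def IsHomeBase (H : TriSys α) : Prop :=
  ∃ P : FRData α, IsHomeBasePartition H P

/-- The neighborhood of a family `U` of `R`'s in the auxiliary bipartite
graph with `W`-side `Wi`. -/
def RNbhd (H : TriSys α) (Wi : Finset α) (U : Finset (Finset α)) : Finset α :=
  Wi.filter fun w => ∃ R ∈ U, RAdj H R w

/-- `C` is an essential subset of `Wi` in the auxiliary bipartite graph:
`C = N(U)` for some `U ⊆ Rfam` with `|U| = |C|`. -/
def EssentialSet (H : TriSys α) (Rfam : Finset (Finset α)) (Wi : Finset α)
    (C : Finset α) : Prop :=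
  ∃ U ⊆ Rfam, U.card = C.card ∧ RNbhd H Wi U = C

/-- `w` is a superfluous vertex of `Wi`: it lies in no essential subset
(equivalently, outside the maximal essential subset). -/
def Superfluous (H : TriSys α) (Rfam : Finset (Finset α)) (Wi : Finset α)
    (w : α) : Prop :=
  w ∈ Wi ∧ ∀ C, EssentialSet H Rfam Wi C → w ∉ C

/-- `w` is a superfluous `W`-vertex of the FR-partition `P` (in its class). -/
def SuperfluousVert (H : TriSys α) (P : FRData α) (w : α) : Prop :=
  ∃ i : Fin 3, Superfluous H P.Rfam (P.W ∩ H.cls i) w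

/-- `v` is an essential `W`-vertex of the FR-partition `P`. -/
def EssentialVertIn (H : TriSys α) (P : FRData α) (v : α) : Prop :=
  ∃ i : Fin 3, EssentialSet H P.Rfam (P.W ∩ H.cls i) {v}

/-- `v` is essential for `R`: it is the unique neighbor of `R` in some `B_i`. -/
def EssentialForIn (H : TriSys α) (P : FRData α) (R : Finset α) (v : α) : Prop :=
  ∃ i : Fin 3, RNbhd H (P.W ∩ H.cls i) {R} = {v}

/-- The neighborhood, inside vertex class `j`, of a set `X` of class-`k`
vertices in the link graph of `H` over the remaining vertex class. -/
def nbr (H : TriSys α) (j k : Fin 3) (X : Finset α) : Finset α :=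
  (H.cls j).filter fun v => ∃ e ∈ H.edges, ecoord e j = v ∧ ecoord e k ∈ X

/-- A cromulent triple `(Y1, Y2, X)` with `Y1 ⊆ V_i`, `Y2 ⊆ V_j`, `X ⊆ V_k`. -/
def IsCromulent (H : TriSys α) (i j k : Fin 3) (Y1 Y2 X : Finset α) : Prop :=
  i ≠ j ∧ i ≠ k ∧ j ≠ k ∧
  Y1.Nonempty ∧ Y2.Nonempty ∧ X.Nonempty ∧
  Y1 ⊆ H.cls i ∧ Y2 ⊆ H.cls j ∧ X ⊆ H.cls k ∧
  Y1.card = Y2.card ∧ Y1.card ≤ X.card ∧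
  nbr H j k X = Y2 ∧
  (∃ M : Finset (α × α × α), H.IsMatching M ∧ M.card = Y1.card ∧
    ∀ e ∈ M, evset e ⊆ Y1 ∪ Y2 ∪ X) ∧
  IsHomeBase (H.delete (Y1 ∪ Y2 ∪ X)) ∧
  (H.delete (Y1 ∪ Y2 ∪ X)).nu + Y1.card = H.nu ∧
  ∀ P : FRData α, IsHomeBasePartition (H.delete (Y1 ∪ Y2 ∪ X)) P →
    nbr H i k X ⊆ Y1 ∪ famUnion P.Rfam ∪ famUnion P.Ffam

/-- A perfectly cromulent triple: condition (5) is strengthened to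
`N_{Lk_{V_j}}(X) = Y1`. -/
def IsPerfCromulent (H : TriSys α) (i j k : Fin 3) (Y1 Y2 X : Finset α) : Prop :=
  i ≠ j ∧ i ≠ k ∧ j ≠ k ∧
  Y1.Nonempty ∧ Y2.Nonempty ∧ X.Nonempty ∧
  Y1 ⊆ H.cls i ∧ Y2 ⊆ H.cls j ∧ X ⊆ H.cls k ∧
  Y1.card = Y2.card ∧ Y1.card ≤ X.card ∧
  nbr H j k X = Y2 ∧
  (∃ M : Finset (α × α × α), H.IsMatching M ∧ M.card = Y1.card ∧
    ∀ e ∈ M, evset e ⊆ Y1 ∪ Y2 ∪ X) ∧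
  IsHomeBase (H.delete (Y1 ∪ Y2 ∪ X)) ∧
  (H.delete (Y1 ∪ Y2 ∪ X)).nu + Y1.card = H.nu ∧
  nbr H i k X = Y1

/-- The link graph of `H` over the class other than `j, k` has a perfect
matching, encoded as a bijection from class `j` onto class `k` realized by
edges of `H`. -/
def LinkPerfectMatching (H : TriSys α) (j k : Fin 3) : Prop :=
  ∃ f : α → α, Set.InjOn f ↑(H.cls j) ∧ (H.cls j).image f = H.cls k ∧
    ∀ v ∈ H.cls j, ∃ e ∈ H.edges, ecoord e j = v ∧ ecoord e k = f v

/-- A proper FR-partition: no `R ∈ 𝓡` together with an edge consisting of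
three `W`-vertices induces a truncated (multi-)Fano plane. -/
def IsProper (H : TriSys α) (P : FRData α) : Prop :=
  ¬ ∃ R ∈ P.Rfam, ∃ e ∈ H.edges, evset e ⊆ P.W ∧ IsMultiFano H (R ∪ evset e)


/-!
An FR-partition has `ν(H) = |𝓕| + |𝓡|`, so it suffices to find that many disjoint edges avoiding
`D = {a, b, c} ∪ S`. A truncated Fano plane meets `D` in at most two vertices from different
classes and therefore keeps one of its four edges. Each `R ∈ 𝓡` gets a class containing `R ∩ D`
and a private neighbour `w ∈ W \ D` in that class; the edge through `w` and two vertices of `R`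
then avoids `D`. These neighbours come from Hall's theorem in the graphs `B_i`: superfluous
vertices can be dropped; a vertex essential for `R` serves only `R`; and a non-essential `a` can
be dropped either outright or after moving one member of a minimal set `U` with `|N(U)| = |U|`
to another class.
-/

namespace TriSys

variable {H : TriSys α} {i j r s t : Fin 3} {p q u v : α} {e : α × α × α}

theorem disjoint_cls (h : i ≠ j) : Disjoint (H.cls i) (H.cls j) := by
  fin_cases i <;> fin_cases j <;> first
    | exact absurd rfl h
    | exact H.h12 | exact H.h13 | exact H.h23
    | exact H.h12.symm | exact H.h13.symm | exact H.h23.symm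

theorem cls_eq_of_mem (hi : v ∈ H.cls i) (hj : v ∈ H.cls j) : i = j := by
  by_contra h
  exact Finset.disjoint_left.1 (H.disjoint_cls h) hi hj

theorem mem_evset : v ∈ evset e ↔ v = e.1 ∨ v = e.2.1 ∨ v = e.2.2 := by
  simp [evset]

theorem eq_ecoord_of_mem_cls (he : e ∈ H.edges) (hv : v ∈ evset e) (hs : v ∈ H.cls s) :
    v = ecoord e s := by
  have h0 : e.1 ∈ H.cls 0 := H.mem1 e he
  have h1 : e.2.1 ∈ H.cls 1 := H.mem2 e he
  have h2 : e.2.2 ∈ H.cls 2 := H.mem3 e he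
  rcases mem_evset.1 hv with rfl | rfl | rfl <;> fin_cases s <;>
    first
      | rfl
      | exact absurd (H.cls_eq_of_mem h0 hs) (by decide)
      | exact absurd (H.cls_eq_of_mem h1 hs) (by decide)
      | exact absurd (H.cls_eq_of_mem h2 hs) (by decide)

theorem eq_of_mem_evset_of_mem_cls (he : e ∈ H.edges) (hu : u ∈ evset e) (hv : v ∈ evset e)
    (hus : u ∈ H.cls s) (hvs : v ∈ H.cls s) : u = v :=
  (H.eq_ecoord_of_mem_cls he hu hus).trans (H.eq_ecoord_of_mem_cls he hv hvs).symm

theorem eq_or_eq_of_mem_pair (hp : p ∈ H.cls s) (hq : q ∈ H.cls t) (hv : v ∈ H.cls r)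
    (hvpq : v ∈ ({p, q} : Finset α)) : r = s ∨ r = t := by
  rcases Finset.mem_insert.1 hvpq with rfl | hvq
  · exact Or.inl (H.cls_eq_of_mem hv hp)
  · exact Or.inr (H.cls_eq_of_mem hv (Finset.mem_singleton.1 hvq ▸ hq))

theorem eq_of_mem_pair (hp : p ∈ H.cls s) (hq : q ∈ H.cls t) (hst : s ≠ t)
    (hu : u ∈ H.cls r) (hv : v ∈ H.cls r) (hupq : u ∈ ({p, q} : Finset α))
    (hvpq : v ∈ ({p, q} : Finset α)) : u = v := by
  simp only [Finset.mem_insert, Finset.mem_singleton] at hupq hvpq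
  rcases hupq with rfl | rfl <;> rcases hvpq with rfl | rfl
  · rfl
  · exact absurd ((H.cls_eq_of_mem hp hu).trans (H.cls_eq_of_mem hv hq)) hst
  · exact absurd ((H.cls_eq_of_mem hp hv).trans (H.cls_eq_of_mem hu hq)) hst
  · rfl

theorem mem_delete_edges {D : Finset α} :
    e ∈ (H.delete D).edges ↔ e ∈ H.edges ∧ Disjoint (evset e) D := by
  simp [TriSys.delete, Multiset.mem_filter, evset, Finset.disjoint_left, or_imp, forall_and]

theorem delete_cls (D : Finset α) (s : Fin 3) : (H.delete D).cls s = H.cls s \ D := by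
  fin_cases s <;> rfl

theorem card_le_nu {M : Finset (α × α × α)} (hM : H.IsMatching M) : M.card ≤ H.nu := by
  refine le_csSup ⟨H.edges.toFinset.card, ?_⟩ ⟨M, hM, rfl⟩
  rintro n ⟨M', hM', rfl⟩
  exact Finset.card_le_card fun e he => Multiset.mem_toFinset.2 (hM'.1 e he)

theorem nu_delete_le (D : Finset α) : (H.delete D).nu ≤ H.nu := by
  refine csSup_le ⟨0, ∅, ⟨by simp, by simp⟩, rfl⟩ ?_
  rintro n ⟨M, hM, rfl⟩
  exact card_le_nu ⟨fun e he => (mem_delete_edges.1 (hM.1 e he)).1, hM.2⟩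

theorem card_le_nu_of_pairwiseDisjoint {ι : Type*} {I : Finset ι} {τ : ι → Finset α}
    (hτ : (I : Set ι).PairwiseDisjoint τ) (he : ∀ x ∈ I, ∃ e ∈ H.edges, evset e ⊆ τ x) :
    I.card ≤ H.nu := by
  rcases I.eq_empty_or_nonempty with rfl | ⟨x₀, hx₀⟩
  · simp
  have : Nonempty (α × α × α) := ⟨(he x₀ hx₀).choose⟩
  choose! f hf hfτ using he
  have hdisj : (I : Set ι).PairwiseDisjoint (evset ∘ f) := hτ.mono_on fun x hx => hfτ x hx
  have hinj : Set.InjOn f I := by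
    intro x hx y hy hxy
    by_contra hne
    have hself := hdisj hx hy hne
    simp only [Function.onFun, Function.comp, hxy, Finset.disjoint_self_iff_empty] at hself
    simp [evset] at hself
  rw [← Finset.card_image_of_injOn hinj]
  refine card_le_nu ⟨fun e he => ?_, fun e he e' he' hne => ?_⟩
  · obtain ⟨x, hx, rfl⟩ := Finset.mem_image.1 he
    exact hf x hx
  · obtain ⟨x, hx, rfl⟩ := Finset.mem_image.1 he
    obtain ⟨y, hy, rfl⟩ := Finset.mem_image.1 he'
    exact hdisj hx hy fun h => hne (congrArg f h)

end TriSys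

theorem evset_subset_insert_of_two_le_card_inter {e : α × α × α} {R : Finset α} {w : α}
    (hw : w ∈ evset e) (hwR : w ∉ R) (h2 : 2 ≤ (evset e ∩ R).card) :
    evset e ⊆ insert w R := by
  intro v hv
  by_contra hvwR
  rw [Finset.mem_insert, not_or] at hvwR
  have hsub : evset e ∩ R ⊆ ((evset e).erase v).erase w := by
    intro u hu
    obtain ⟨hue, huR⟩ := Finset.mem_inter.1 hu
    refine Finset.mem_erase.2 ⟨fun h => hwR (h ▸ huR), Finset.mem_erase.2 ⟨?_, hue⟩⟩
    rintro rfl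
    exact hvwR.2 huR
  have h3 : (evset e).card ≤ 3 := Finset.card_le_three
  have := Finset.card_le_card hsub
  rw [Finset.card_erase_of_mem (Finset.mem_erase.2 ⟨fun h => hvwR.1 h.symm, hw⟩),
    Finset.card_erase_of_mem hv] at this
  omega

theorem radj_delete_iff {H : TriSys α} {R S : Finset α} {w : α} (hRS : Disjoint R S)
    (hwS : w ∉ S) (hwR : w ∉ R) : RAdj (H.delete S) R w ↔ RAdj H R w := by
  refine ⟨fun ⟨e, he, hwe, h2⟩ => ⟨e, (TriSys.mem_delete_edges.1 he).1, hwe, h2⟩, ?_⟩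
  rintro ⟨e, he, hwe, h2⟩
  refine ⟨e, TriSys.mem_delete_edges.2 ⟨he, ?_⟩, hwe, h2⟩
  refine Finset.disjoint_of_subset_left (evset_subset_insert_of_two_le_card_inter hwe hwR h2) ?_
  exact Finset.disjoint_insert_left.2 ⟨hwS, hRS⟩

/-- An edge witnessing `RAdj H R w` consists of `w` and the two vertices of `R` outside the class
of `w`. -/
theorem RAdj.exists_edge_disjoint {H : TriSys α} {R D : Finset α} {w : α} {t : Fin 3}
    (h : RAdj H R w) (hwR : w ∉ R) (hwD : w ∉ D) (hwt : w ∈ H.cls t)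
    (hRD : ∀ d ∈ R, d ∈ D → d ∈ H.cls t) :
    ∃ e ∈ H.edges, evset e ⊆ insert w R ∧ Disjoint (evset e) D := by
  obtain ⟨e, he, hwe, h2⟩ := h
  have hsub := evset_subset_insert_of_two_le_card_inter hwe hwR h2
  refine ⟨e, he, hsub, Finset.disjoint_left.2 fun v hve hvD => ?_⟩
  rcases Finset.mem_insert.1 (hsub hve) with rfl | hvR
  · exact hwD hvD
  · exact hwR (H.eq_of_mem_evset_of_mem_cls he hve hwe (hRD v hvR hvD) hwt ▸ hvR)

theorem IsMultiFano.exists_edge_disjoint_pair {H : TriSys α} {F : Finset α} (hF : IsMultiFano H F)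
    {p q : α} {s t : Fin 3} (hp : p ∈ H.cls s) (hq : q ∈ H.cls t) (hst : s ≠ t) :
    ∃ e ∈ H.edges, evset e ⊆ F ∧ Disjoint (evset e) {p, q} := by
  obtain ⟨a, b, c, x, y, z, ha, hx, hb, hy, hc, hz, hax, hby, hcz, rfl, hind⟩ := hF
  replace ha : a ∈ H.cls 0 := ha
  replace hx : x ∈ H.cls 0 := hx
  replace hb : b ∈ H.cls 1 := hb
  replace hy : y ∈ H.cls 1 := hy
  replace hc : c ∈ H.cls 2 := hc
  replace hz : z ∈ H.cls 2 := hz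
  set T : Finset α := {p, q}
  -- `T` misses one of the three classes and meets the other two at most once each
  have hmiss : ¬((a ∈ T ∨ x ∈ T) ∧ (b ∈ T ∨ y ∈ T) ∧ (c ∈ T ∨ z ∈ T)) := by
    rintro ⟨h0, h1, h2⟩
    have h0 := h0.elim (H.eq_or_eq_of_mem_pair hp hq ha) (H.eq_or_eq_of_mem_pair hp hq hx)
    have h1 := h1.elim (H.eq_or_eq_of_mem_pair hp hq hb) (H.eq_or_eq_of_mem_pair hp hq hy)
    have h2 := h2.elim (H.eq_or_eq_of_mem_pair hp hq hc) (H.eq_or_eq_of_mem_pair hp hq hz)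
    omega
  have key : (a ∉ T ∧ b ∉ T ∧ c ∉ T) ∨ (a ∉ T ∧ y ∉ T ∧ z ∉ T) ∨
      (x ∉ T ∧ b ∉ T ∧ z ∉ T) ∨ (x ∉ T ∧ y ∉ T ∧ c ∉ T) := by
    have h0 : ¬(a ∈ T ∧ x ∈ T) := fun h => hax (H.eq_of_mem_pair hp hq hst ha hx h.1 h.2)
    have h1 : ¬(b ∈ T ∧ y ∈ T) := fun h => hby (H.eq_of_mem_pair hp hq hst hb hy h.1 h.2)
    have h2 : ¬(c ∈ T ∧ z ∈ T) := fun h => hcz (H.eq_of_mem_pair hp hq hst hc hz h.1 h.2)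
    clear * - h0 h1 h2 hmiss
    tauto
  have avoid : ∀ e ∈ FanoEdges a b c x y z, e.1 ∉ T → e.2.1 ∉ T → e.2.2 ∉ T →
      ∃ e ∈ H.edges, evset e ⊆ {a, b, c, x, y, z} ∧ Disjoint (evset e) T := by
    intro e he h1 h2 h3
    rw [← hind, inducedEdges, Multiset.mem_toFinset, Multiset.mem_filter] at he
    refine ⟨e, he.1, he.2, ?_⟩
    simp only [evset, Finset.disjoint_insert_left, Finset.disjoint_singleton_left]
    exact ⟨h1, h2, h3⟩
  rcases key with ⟨h1, h2, h3⟩ | ⟨h1, h2, h3⟩ | ⟨h1, h2, h3⟩ | ⟨h1, h2, h3⟩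
  exacts [avoid (a, b, c) (by simp [FanoEdges]) h1 h2 h3,
    avoid (a, y, z) (by simp [FanoEdges]) h1 h2 h3,
    avoid (x, b, z) (by simp [FanoEdges]) h1 h2 h3,
    avoid (x, y, c) (by simp [FanoEdges]) h1 h2 h3]

theorem IsMultiFano.exists_edge_disjoint {H : TriSys α} {F D : Finset α} (hF : IsMultiFano H F)
    {p q : α} {s t : Fin 3} (hp : p ∈ H.cls s) (hq : q ∈ H.cls t) (hst : s ≠ t)
    (hD : F ∩ D ⊆ {p, q}) : ∃ e ∈ H.edges, evset e ⊆ F ∧ Disjoint (evset e) D := by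
  obtain ⟨e, he, heF, hepq⟩ := hF.exists_edge_disjoint_pair hp hq hst
  refine ⟨e, he, heF, Finset.disjoint_left.2 fun v hve hvD => ?_⟩
  exact Finset.disjoint_left.1 hepq hve (hD (Finset.mem_inter.2 ⟨heF hve, hvD⟩))

section Hall

variable {H : TriSys α} {Rf U V : Finset (Finset α)} {Wi Wi' : Finset α} {R : Finset α} {w x : α}

theorem mem_rnbhd : w ∈ RNbhd H Wi U ↔ w ∈ Wi ∧ ∃ R ∈ U, RAdj H R w :=
  Finset.mem_filter

theorem mem_rnbhd_singleton : w ∈ RNbhd H Wi {R} ↔ w ∈ Wi ∧ RAdj H R w := by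
  simp [mem_rnbhd]

theorem rnbhd_sdiff (X : Finset α) : RNbhd H (Wi \ X) U = RNbhd H Wi U \ X := by
  ext w
  simp only [mem_rnbhd, Finset.mem_sdiff]
  tauto

theorem rnbhd_mono (h : U ⊆ V) : RNbhd H Wi U ⊆ RNbhd H Wi V := by
  intro w
  simp only [mem_rnbhd]
  exact fun ⟨hw, R, hR, hadj⟩ => ⟨hw, R, h hR, hadj⟩

theorem rnbhd_union : RNbhd H Wi (U ∪ V) = RNbhd H Wi U ∪ RNbhd H Wi V := by
  ext w
  simp only [mem_rnbhd, Finset.mem_union, or_and_right, exists_or, and_or_left]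

theorem rnbhd_inter_subset : RNbhd H Wi (U ∩ V) ⊆ RNbhd H Wi U ∩ RNbhd H Wi V :=
  Finset.subset_inter (rnbhd_mono Finset.inter_subset_left)
    (rnbhd_mono Finset.inter_subset_right)

namespace SaturatingR

theorem mono_left (h : SaturatingR H Rf Wi) (hU : U ⊆ Rf) : SaturatingR H U Wi := by
  obtain ⟨f, hinj, hf⟩ := h
  exact ⟨f, hinj.mono (Finset.coe_subset.2 hU), fun R hR => hf R (hU hR)⟩

theorem mono_right (h : SaturatingR H Rf Wi) (hW : Wi ⊆ Wi') : SaturatingR H Rf Wi' := by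
  obtain ⟨f, hinj, hf⟩ := h
  exact ⟨f, hinj, fun R hR => ⟨hW (hf R hR).1, (hf R hR).2⟩⟩

theorem nonempty (h : SaturatingR H Rf Wi) : Nonempty α :=
  let ⟨f, _⟩ := h
  ⟨f ∅⟩

theorem card_le_card_rnbhd (h : SaturatingR H Rf Wi) (hU : U ⊆ Rf) :
    U.card ≤ (RNbhd H Wi U).card := by
  obtain ⟨f, hinj, hf⟩ := h
  have himg : U.image f ⊆ RNbhd H Wi U := by
    intro w hw
    obtain ⟨R, hR, rfl⟩ := Finset.mem_image.1 hw
    exact mem_rnbhd.2 ⟨(hf R (hU hR)).1, R, hR, (hf R (hU hR)).2⟩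
  rw [← Finset.card_image_of_injOn (hinj.mono (Finset.coe_subset.2 hU))]
  exact Finset.card_le_card himg

end SaturatingR

theorem saturatingR_of_card_le [Nonempty α] (h : ∀ U ⊆ Rf, U.card ≤ (RNbhd H Wi U).card) :
    SaturatingR H Rf Wi := by
  obtain ⟨f, hinj, hf⟩ := (Finset.all_card_le_biUnion_card_iff_exists_injective
    fun R : Rf => RNbhd H Wi {R.1}).1 fun s => by
      have hs : s.biUnion (fun R => RNbhd H Wi {R.1}) = RNbhd H Wi (s.map (.subtype _)) := by
        ext w
        simp only [Finset.mem_biUnion, mem_rnbhd, Finset.mem_map,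
          Function.Embedding.coe_subtype]
        aesop
      rw [hs, ← Finset.card_map (.subtype _)]
      exact h _ fun R hR => by
        obtain ⟨R', -, rfl⟩ := Finset.mem_map.1 hR
        exact R'.2
  refine ⟨fun R => if hR : R ∈ Rf then f ⟨R, hR⟩ else Classical.arbitrary α, ?_, ?_⟩
  · intro R hR R' hR' heq
    simp only [Finset.mem_coe] at hR hR'
    simp only [dif_pos hR, dif_pos hR'] at heq
    exact congrArg Subtype.val (hinj heq)
  · intro R hR
    simpa [dif_pos hR] using mem_rnbhd_singleton.1 (hf ⟨R, hR⟩)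

theorem saturatingR_singleton_iff : SaturatingR H {R} Wi ↔ (RNbhd H Wi {R}).Nonempty := by
  refine ⟨fun h => ?_, fun ⟨w, hw⟩ => ⟨fun _ => w, by simp, ?_⟩⟩
  · have := h.card_le_card_rnbhd subset_rfl
    rw [Finset.card_singleton] at this
    exact Finset.card_pos.1 this
  · intro R' hR'
    rw [Finset.mem_singleton.1 hR']
    exact mem_rnbhd_singleton.1 hw

namespace SaturatingR

theorem sdiff_singleton_of_notMem {W X S : Finset α}
    (h : SaturatingR H Rf ((W ∩ X) \ S)) (hx : x ∉ W) : SaturatingR H Rf (((W ∩ X) \ S) \ {x}) := by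
  rwa [Finset.sdiff_singleton_eq_erase,
    Finset.erase_eq_of_notMem fun h => hx (Finset.mem_inter.1 (Finset.mem_sdiff.1 h).1).1]

theorem sdiff_singleton (h : SaturatingR H Rf Wi)
    (hx : ∀ C, EssentialSet H Rf Wi C → x ∉ C) : SaturatingR H Rf (Wi \ {x}) := by
  have := h.nonempty
  refine saturatingR_of_card_le fun U hU => ?_
  have hall := h.card_le_card_rnbhd hU
  rw [rnbhd_sdiff, Finset.sdiff_singleton_eq_erase]
  by_cases hxU : x ∈ RNbhd H Wi U
  · have hne : U.card ≠ (RNbhd H Wi U).card := fun heq => hx _ ⟨U, hU, heq, rfl⟩ hxU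
    rw [Finset.card_erase_of_mem hxU]
    omega
  · rwa [Finset.erase_eq_of_notMem hxU]

/-- Sets `U` with `|N(U)| = |U|` (tight sets) are closed under intersection, by submodularity of
`|N(·)|`. -/
theorem tight_inter (h : SaturatingR H Rf Wi) (hU : U ⊆ Rf) (hV : V ⊆ Rf)
    (hUt : U.card = (RNbhd H Wi U).card) (hVt : V.card = (RNbhd H Wi V).card) :
    (U ∩ V).card = (RNbhd H Wi (U ∩ V)).card ∧
      RNbhd H Wi (U ∩ V) = RNbhd H Wi U ∩ RNbhd H Wi V := by
  have hunion := h.card_le_card_rnbhd (Finset.union_subset hU hV)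
  have hinter := h.card_le_card_rnbhd (U := U ∩ V) (Finset.inter_subset_left.trans hU)
  have hsub := Finset.card_le_card (rnbhd_inter_subset (H := H) (Wi := Wi) (U := U) (V := V))
  have hN := Finset.card_union_add_card_inter (RNbhd H Wi U) (RNbhd H Wi V)
  have hR := Finset.card_union_add_card_inter U V
  rw [← rnbhd_union] at hN
  have hcard : (U ∩ V).card = (RNbhd H Wi (U ∩ V)).card ∧
      (RNbhd H Wi U ∩ RNbhd H Wi V).card ≤ (RNbhd H Wi (U ∩ V)).card := by
    omega
  exact ⟨hcard.1, Finset.eq_of_subset_of_card_le rnbhd_inter_subset hcard.2⟩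

/-- If no tight set has `x` in its neighbourhood, `x` can be dropped; otherwise a minimal such
tight set `U` works, because for `R ∈ U` a tight `V ⊆ Rf \ {R}` with `x ∈ N(V)` would make
`U ∩ V` a smaller one. -/
theorem sdiff_singleton_or_exists_erase (h : SaturatingR H Rf Wi)
    (hx : ¬EssentialSet H Rf Wi {x}) :
    SaturatingR H Rf (Wi \ {x}) ∨
      ∃ U ⊆ Rf, 2 ≤ U.card ∧ ∀ R ∈ U, SaturatingR H (Rf.erase R) (Wi \ {x}) := by
  set T := Rf.powerset.filter fun U => U.card = (RNbhd H Wi U).card ∧ x ∈ RNbhd H Wi U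
  rcases T.eq_empty_or_nonempty with hT | hT
  · refine Or.inl (h.sdiff_singleton ?_)
    rintro C ⟨U, hU, hcard, rfl⟩ hxU
    have : U ∈ T := Finset.mem_filter.2 ⟨Finset.mem_powerset.2 hU, hcard, hxU⟩
    simp [hT] at this
  obtain ⟨Um, hUm, hmin⟩ := T.exists_min_image Finset.card hT
  obtain ⟨hUmRf, hUmt, hxUm⟩ := Finset.mem_filter.1 hUm
  rw [Finset.mem_powerset] at hUmRf
  refine Or.inr ⟨Um, hUmRf, ?_, fun R₀ hR₀ => ?_⟩
  · obtain ⟨w, hw⟩ := Finset.card_pos.1 (hUmt ▸ Finset.card_pos.2 ⟨x, hxUm⟩)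
    by_contra hlt
    have h1 : (RNbhd H Wi Um).card = 1 := by
      have := Finset.card_pos.2 ⟨w, hw⟩
      omega
    obtain ⟨y, hy⟩ := Finset.card_eq_one.1 h1
    rw [hy, Finset.mem_singleton] at hxUm
    subst hxUm
    exact hx ⟨Um, hUmRf, by rw [Finset.card_singleton]; omega, hy⟩
  · refine (h.mono_left (Finset.erase_subset R₀ Rf)).sdiff_singleton ?_
    rintro C ⟨V, hV, hVt, rfl⟩ hxV
    have hVRf := hV.trans (Finset.erase_subset R₀ Rf)
    obtain ⟨hIt, hIN⟩ := h.tight_inter hUmRf hVRf hUmt hVt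
    have hI : Um ∩ V ∈ T := Finset.mem_filter.2 ⟨Finset.mem_powerset.2
      (Finset.inter_subset_left.trans hUmRf), hIt, hIN ▸ Finset.mem_inter.2 ⟨hxUm, hxV⟩⟩
    have hUmV : Um ∩ V = Um := Finset.eq_of_subset_of_card_le Finset.inter_subset_left (hmin _ hI)
    exact Finset.notMem_erase R₀ Rf (hV (Finset.inter_eq_left.1 hUmV hR₀))

theorem erase_sdiff_singleton (h : SaturatingR H Rf Wi) (hR : R ∈ Rf)
    (hx : RNbhd H Wi {R} ⊆ {x}) : SaturatingR H (Rf.erase R) (Wi \ {x}) := by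
  obtain ⟨f, hinj, hf⟩ := h
  have hfR : f R = x := Finset.mem_singleton.1 (hx (mem_rnbhd_singleton.2 (hf R hR)))
  refine ⟨f, hinj.mono (Finset.coe_subset.2 (Finset.erase_subset R Rf)), fun R' hR' => ?_⟩
  obtain ⟨hne, hR'⟩ := Finset.mem_erase.1 hR'
  refine ⟨Finset.mem_sdiff.2 ⟨(hf R' hR').1, fun hfx => hne ?_⟩, (hf R' hR').2⟩
  exact hinj hR' hR ((Finset.mem_singleton.1 hfx).trans hfR.symm)

theorem singleton_sdiff_singleton (h : SaturatingR H Rf Wi) (hR : R ∈ Rf)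
    (hx : RNbhd H Wi {R} ≠ {x}) : SaturatingR H {R} (Wi \ {x}) := by
  have hne := saturatingR_singleton_iff.1 (h.mono_left (Finset.singleton_subset_iff.2 hR))
  rw [saturatingR_singleton_iff, rnbhd_sdiff]
  by_contra hempty
  rw [Finset.not_nonempty_iff_eq_empty, Finset.sdiff_eq_empty_iff_subset] at hempty
  exact hx ((Finset.subset_singleton_iff.1 hempty).resolve_left hne.ne_empty)

theorem exists_singleton_sdiff_singleton (h : SaturatingR H Rf Wi) (hU : U ⊆ Rf)
    (hU2 : 2 ≤ U.card) (x : α) : ∃ R ∈ U, SaturatingR H {R} (Wi \ {x}) := by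
  obtain ⟨w, hw, hwx⟩ := Finset.exists_mem_ne
    (hU2.trans_lt' (by omega) |>.trans_le (h.card_le_card_rnbhd hU)) x
  obtain ⟨hwW, R, hR, hadj⟩ := mem_rnbhd.1 hw
  refine ⟨R, hR, saturatingR_singleton_iff.2 ⟨w, mem_rnbhd_singleton.2 ⟨?_, hadj⟩⟩⟩
  exact Finset.mem_sdiff.2 ⟨hwW, by simpa using hwx⟩

end SaturatingR

end Hall

theorem mem_famUnion {G : Finset (Finset α)} {v : α} : v ∈ famUnion G ↔ ∃ A ∈ G, v ∈ A := by
  simp [famUnion]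

theorem rnbhd_delete {H : TriSys α} {W S : Finset α} {U : Finset (Finset α)} (hSW : S ⊆ W)
    (hU : ∀ R ∈ U, Disjoint R W) (s : Fin 3) :
    RNbhd (H.delete S) ((W \ S) ∩ (H.delete S).cls s) U = RNbhd H ((W ∩ H.cls s) \ S) U := by
  have hW : (W \ S) ∩ (H.delete S).cls s = (W ∩ H.cls s) \ S := by
    rw [TriSys.delete_cls]
    ext v
    simp only [Finset.mem_inter, Finset.mem_sdiff]
    tauto
  ext w
  rw [hW, mem_rnbhd, mem_rnbhd]
  refine and_congr_right fun hw => exists_congr fun R => and_congr_right fun hR => ?_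
  obtain ⟨hwW, hwS⟩ := Finset.mem_sdiff.1 hw
  exact radj_delete_iff ((hU R hR).mono_right hSW) hwS
    (Finset.disjoint_right.1 (hU R hR) (Finset.mem_inter.1 hwW).1)

theorem IsMatchable.saturatingR_sdiff {H : TriSys α} {P : FRData α} {S : Finset α}
    (hM : IsMatchable H P) (hS : ∀ v ∈ S, SuperfluousVert H P v)
    (hSone : ∀ s, (S ∩ H.cls s).card ≤ 1) (s : Fin 3) :
    SaturatingR H P.Rfam ((P.W ∩ H.cls s) \ S) := by
  by_cases hx : ∃ x ∈ S, x ∈ H.cls s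
  · obtain ⟨x, hxS, hxs⟩ := hx
    obtain ⟨t, hxW, hsup⟩ := hS x hxS
    obtain rfl : t = s := H.cls_eq_of_mem (Finset.mem_inter.1 hxW).2 hxs
    refine ((hM t).sdiff_singleton hsup).mono_right fun v hv => ?_
    obtain ⟨hvW, hvx⟩ := Finset.mem_sdiff.1 hv
    refine Finset.mem_sdiff.2 ⟨hvW, fun hvS => hvx ?_⟩
    exact Finset.mem_singleton.2 (Finset.card_le_one.1 (hSone t) v
      (Finset.mem_inter.2 ⟨hvS, (Finset.mem_inter.1 hvW).2⟩) x (Finset.mem_inter.2 ⟨hxS, hxs⟩))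
  · simp only [not_exists, not_and] at hx
    exact (hM s).mono_right fun v hv =>
      Finset.mem_sdiff.2 ⟨hv, fun hvS => hx v hvS (Finset.mem_inter.1 hv).2⟩

namespace IsFRPartition

variable {H : TriSys α} {P : FRData α} {F R R' : Finset α} {v : α}

theorem isMultiFano (hFR : IsFRPartition H P) (hF : F ∈ P.Ffam) : IsMultiFano H F :=
  hFR.2.2.2.2.2.2.1 F hF

theorem card_add_card (hFR : IsFRPartition H P) : P.Ffam.card + P.Rfam.card = H.nu :=
  hFR.2.2.2.2.2.2.2.2

theorem disjoint_R_W (hFR : IsFRPartition H P) (hR : R ∈ P.Rfam) : Disjoint R P.W :=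
  hFR.2.2.2.2.1 R hR

theorem notMem_W_of_mem_R (hFR : IsFRPartition H P) (hR : R ∈ P.Rfam) (hv : v ∈ R) :
    v ∉ P.W :=
  Finset.disjoint_left.1 (hFR.disjoint_R_W hR) hv

theorem notMem_W_of_mem_F (hFR : IsFRPartition H P) (hF : F ∈ P.Ffam) (hv : v ∈ F) :
    v ∉ P.W :=
  Finset.disjoint_left.1 (hFR.2.2.2.1 F hF) hv

theorem notMem_R_of_mem_F (hFR : IsFRPartition H P) (hF : F ∈ P.Ffam) (hR : R ∈ P.Rfam)
    (hv : v ∈ F) : v ∉ R :=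
  Finset.disjoint_left.1 (hFR.2.2.1 F hF R hR) hv

theorem eq_of_mem_R (hFR : IsFRPartition H P) (hR : R ∈ P.Rfam) (hR' : R' ∈ P.Rfam)
    (hv : v ∈ R) (hv' : v ∈ R') : R = R' := by
  by_contra hne
  exact Finset.disjoint_left.1 (hFR.2.1 R hR R' hR' hne) hv hv'

theorem essentialForIn_delete_iff (hFR : IsFRPartition H P) {S : Finset α} (hSW : S ⊆ P.W)
    (hR : R ∈ P.Rfam) :
    EssentialForIn (H.delete S) ⟨P.Ffam, P.Rfam, P.W \ S⟩ R v ↔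
      ∃ s, RNbhd H ((P.W ∩ H.cls s) \ S) {R} = {v} := by
  refine exists_congr fun s => ?_
  rw [← rnbhd_delete hSW (by simpa using hFR.disjoint_R_W hR) s]

theorem essentialVertIn_delete_iff (hFR : IsFRPartition H P) {S : Finset α} (hSW : S ⊆ P.W) :
    EssentialVertIn (H.delete S) ⟨P.Ffam, P.Rfam, P.W \ S⟩ v ↔
      ∃ s, EssentialSet H P.Rfam ((P.W ∩ H.cls s) \ S) {v} := by
  refine exists_congr fun s => exists_congr fun U => and_congr_right fun hU => ?_
  rw [← rnbhd_delete hSW (fun R hR => hFR.disjoint_R_W (hU hR)) s]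

theorem pairwiseDisjoint_blocks (hFR : IsFRPartition H P) {w : Finset α → α}
    (hinj : Set.InjOn w P.Rfam) (hw : ∀ R ∈ P.Rfam, w R ∈ P.W) :
    ((P.Ffam.disjSum P.Rfam : Finset _) : Set (Finset α ⊕ Finset α)).PairwiseDisjoint
      (Sum.elim id fun R => insert (w R) R) := by
  have hFRw : ∀ F ∈ P.Ffam, ∀ R ∈ P.Rfam, Disjoint F (insert (w R) R) := fun F hF R hR =>
    Finset.disjoint_insert_right.2 ⟨fun h => hFR.notMem_W_of_mem_F hF h (hw R hR),
      hFR.2.2.1 F hF R hR⟩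
  rintro (F | R) hx (F' | R') hy hne <;>
    simp only [Finset.mem_coe, Finset.inl_mem_disjSum, Finset.inr_mem_disjSum] at hx hy
  · exact hFR.1 F hx F' hy fun h => hne (congrArg _ h)
  · exact hFRw F hx R' hy
  · exact (hFRw F' hy R hx).symm
  · have hRR' : R ≠ R' := fun h => hne (congrArg _ h)
    simp only [Function.onFun, Sum.elim_inr, Finset.disjoint_insert_left,
      Finset.disjoint_insert_right, Finset.mem_insert, not_or]
    exact ⟨⟨fun h => hRR' (hinj hx hy h.symm), fun h => hFR.notMem_W_of_mem_R hx h (hw R' hy)⟩,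
      fun h => hFR.notMem_W_of_mem_R hy h (hw R hx), hFR.2.1 R hx R' hy hRR'⟩

/-- The edges witnessing `RAdj H R (w R)`, together with one edge in each Fano block, form a
matching of `H - D` of size `|𝓕| + |𝓡| = ν(H)`. -/
theorem nu_delete_eq_of_injOn (hFR : IsFRPartition H P) {D : Finset α}
    (hF : ∀ F ∈ P.Ffam, ∃ e ∈ H.edges, evset e ⊆ F ∧ Disjoint (evset e) D)
    {w : Finset α → α} {t : Finset α → Fin 3} (hinj : Set.InjOn w P.Rfam)
    (hw : ∀ R ∈ P.Rfam, w R ∈ (P.W ∩ H.cls (t R)) \ D ∧ RAdj H R (w R))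
    (hRD : ∀ R ∈ P.Rfam, ∀ d ∈ R, d ∈ D → d ∈ H.cls (t R)) :
    (H.delete D).nu = H.nu := by
  have hwW : ∀ R ∈ P.Rfam, w R ∈ P.W ∩ H.cls (t R) ∧ w R ∉ D := fun R hR =>
    Finset.mem_sdiff.1 (hw R hR).1
  refine le_antisymm (H.nu_delete_le D) ?_
  rw [← hFR.card_add_card, ← Finset.card_disjSum]
  refine (H.delete D).card_le_nu_of_pairwiseDisjoint
    (hFR.pairwiseDisjoint_blocks hinj fun R hR => (Finset.mem_inter.1 (hwW R hR).1).1) ?_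
  rintro (F | R) hx <;> simp only [Finset.inl_mem_disjSum, Finset.inr_mem_disjSum] at hx
  · obtain ⟨e, he, heF, heD⟩ := hF F hx
    exact ⟨e, TriSys.mem_delete_edges.2 ⟨he, heD⟩, heF⟩
  · obtain ⟨hwWt, hwD⟩ := hwW R hx
    obtain ⟨hwW, hwt⟩ := Finset.mem_inter.1 hwWt
    obtain ⟨e, he, heR, heD⟩ := (hw R hx).2.exists_edge_disjoint
      (fun h => hFR.notMem_W_of_mem_R hx h hwW) hwD hwt (hRD R hx)
    exact ⟨e, TriSys.mem_delete_edges.2 ⟨he, heD⟩, heR⟩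

theorem nu_delete_eq_of_reroute (hFR : IsFRPartition H P) {D : Finset α}
    (hF : ∀ F ∈ P.Ffam, ∃ e ∈ H.edges, evset e ⊆ F ∧ Disjoint (evset e) D)
    {U : Finset (Finset α)} {s s' : Fin 3} (hss' : s ≠ s')
    (hrest : SaturatingR H (P.Rfam \ U) ((P.W ∩ H.cls s) \ D))
    (hU : SaturatingR H U ((P.W ∩ H.cls s') \ D))
    (hDrest : ∀ R ∈ P.Rfam \ U, ∀ d ∈ R, d ∈ D → d ∈ H.cls s)
    (hDU : ∀ R ∈ P.Rfam ∩ U, ∀ d ∈ R, d ∈ D → d ∈ H.cls s') :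
    (H.delete D).nu = H.nu := by
  obtain ⟨f, hfinj, hf⟩ := hrest
  obtain ⟨g, hginj, hg⟩ := hU
  have hw : ∀ R ∈ P.Rfam, (if R ∈ U then g R else f R) ∈
      (P.W ∩ H.cls (if R ∈ U then s' else s)) \ D ∧ RAdj H R (if R ∈ U then g R else f R) := by
    intro R hR
    split_ifs with hRU
    exacts [hg R hRU, hf R (Finset.mem_sdiff.2 ⟨hR, hRU⟩)]
  refine hFR.nu_delete_eq_of_injOn hF (fun R hR R' hR' heq => ?_) hw fun R hR d hd hdD => ?_
  · have hcls := H.cls_eq_of_mem (Finset.mem_inter.1 (Finset.mem_sdiff.1 (hw R hR).1).1).2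
      (heq ▸ (Finset.mem_inter.1 (Finset.mem_sdiff.1 (hw R' hR').1).1).2)
    by_cases h : R ∈ U <;> by_cases h' : R' ∈ U <;> simp only [h, h', if_true, if_false] at heq hcls
    · exact hginj h h' heq
    · exact absurd hcls.symm hss'
    · exact absurd hcls hss'
    · exact hfinj (Finset.mem_sdiff.2 ⟨hR, h⟩) (Finset.mem_sdiff.2 ⟨hR', h'⟩) heq
  · split_ifs with hRU
    exacts [hDU R (Finset.mem_inter.2 ⟨hR, hRU⟩) d hd hdD,
      hDrest R (Finset.mem_sdiff.2 ⟨hR, hRU⟩) d hd hdD]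

theorem saturatingR_filter_mem_sdiff (hFR : IsFRPartition H P) {X S : Finset α}
    (h : SaturatingR H P.Rfam ((P.W ∩ X) \ S)) (x : α) :
    SaturatingR H (P.Rfam.filter (x ∈ ·)) (((P.W ∩ X) \ S) \ {x}) := by
  obtain ⟨f, hinj, hf⟩ := h.mono_left (Finset.filter_subset (fun R => x ∈ R) P.Rfam)
  refine ⟨f, hinj, fun R hR => ⟨Finset.mem_sdiff.2 ⟨(hf R hR).1, fun hfx => ?_⟩, (hf R hR).2⟩⟩
  obtain ⟨hRf, hxR⟩ := Finset.mem_filter.1 hR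
  rw [Finset.mem_singleton] at hfx
  exact hFR.notMem_W_of_mem_R hRf hxR
    (hfx ▸ (Finset.mem_inter.1 (Finset.mem_sdiff.1 (hf R hR).1).1).1)

end IsFRPartition

theorem sdiff_singleton_subset_sdiff_union {W X S T : Finset α} {x : α} (hT : T ∩ X ⊆ {x}) :
    ((W ∩ X) \ S) \ {x} ⊆ (W ∩ X) \ (T ∪ S) := by
  intro v hv
  simp only [Finset.mem_sdiff, Finset.mem_inter, Finset.mem_union, Finset.mem_singleton] at hv ⊢
  refine ⟨hv.1.1, fun hvTS => hv.2 ?_⟩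
  exact hvTS.elim (fun hvT => Finset.mem_singleton.1 (hT (Finset.mem_inter.2 ⟨hvT, hv.1.1.2⟩)))
    fun hvS => absurd hvS hv.1.2

namespace IsFRPartition

variable {H : TriSys α} {P : FRData α} {S T : Finset α} {x x' : α} {s s' : Fin 3}

theorem nu_delete_union_eq_of_reroute (hFR : IsFRPartition H P) (hSW : S ⊆ P.W)
    (hF : ∀ F ∈ P.Ffam, ∃ e ∈ H.edges, evset e ⊆ F ∧ Disjoint (evset e) (T ∪ S))
    {U : Finset (Finset α)} (hss' : s ≠ s') (hTs : T ∩ H.cls s = {x})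
    (hTs' : T ∩ H.cls s' = {x'})
    (hrest : SaturatingR H (P.Rfam \ U) (((P.W ∩ H.cls s) \ S) \ {x}))
    (hU : SaturatingR H U (((P.W ∩ H.cls s') \ S) \ {x'}))
    (hTrest : ∀ R ∈ P.Rfam \ U, ∀ d ∈ R, d ∈ T → d = x)
    (hTU : ∀ R ∈ P.Rfam ∩ U, ∀ d ∈ R, d ∈ T → d = x') :
    (H.delete (T ∪ S)).nu = H.nu := by
  have hx : x ∈ H.cls s := (Finset.mem_inter.1 (hTs.ge (Finset.mem_singleton_self x))).2
  have hx' : x' ∈ H.cls s' := (Finset.mem_inter.1 (hTs'.ge (Finset.mem_singleton_self x'))).2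
  have hdT : ∀ {R d}, R ∈ P.Rfam → d ∈ R → d ∈ T ∪ S → d ∈ T := fun hR hd hdD =>
    (Finset.mem_union.1 hdD).resolve_right fun hdS => hFR.notMem_W_of_mem_R hR hd (hSW hdS)
  refine hFR.nu_delete_eq_of_reroute hF hss'
    (hrest.mono_right (sdiff_singleton_subset_sdiff_union hTs.le))
    (hU.mono_right (sdiff_singleton_subset_sdiff_union hTs'.le))
    (fun R hR d hd hdD => ?_) fun R hR d hd hdD => ?_
  · exact hTrest R hR d hd (hdT (Finset.mem_sdiff.1 hR).1 hd hdD) ▸ hx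
  · exact hTU R hR d hd (hdT (Finset.mem_inter.1 hR).1 hd hdD) ▸ hx'

/-- The members of `𝓡` containing `x'` are matched into class `s'`, the others into class `s`. -/
theorem nu_delete_union_eq_of_reroute_filter (hFR : IsFRPartition H P) (hSW : S ⊆ P.W)
    (hF : ∀ F ∈ P.Ffam, ∃ e ∈ H.edges, evset e ⊆ F ∧ Disjoint (evset e) (T ∪ S))
    (hss' : s ≠ s') (hTs : T ∩ H.cls s = {x}) (hTs' : T ∩ H.cls s' = {x'})
    (hrest : SaturatingR H P.Rfam (((P.W ∩ H.cls s) \ S) \ {x}))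
    (hsat : SaturatingR H P.Rfam ((P.W ∩ H.cls s') \ S))
    (hRT : ∀ R ∈ P.Rfam, ∀ d ∈ R, d ∈ T → d = x') :
    (H.delete (T ∪ S)).nu = H.nu := by
  refine hFR.nu_delete_union_eq_of_reroute hSW hF (U := P.Rfam.filter (x' ∈ ·)) hss' hTs hTs'
    (hrest.mono_left Finset.sdiff_subset) (hFR.saturatingR_filter_mem_sdiff hsat x')
    (fun R hR d hd hdT => ?_) fun R hR d hd hdT => hRT R (Finset.mem_inter.1 hR).1 d hd hdT
  obtain ⟨hRf, hxR⟩ := Finset.mem_sdiff.1 hR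
  obtain rfl := hRT R hRf d hd hdT
  exact absurd (Finset.mem_filter.2 ⟨hRf, hd⟩) hxR

/-- `R₀` is matched into class `s'`, the other members of `𝓡` into class `s`. -/
theorem nu_delete_union_eq_of_reroute_singleton (hFR : IsFRPartition H P) (hSW : S ⊆ P.W)
    (hF : ∀ F ∈ P.Ffam, ∃ e ∈ H.edges, evset e ⊆ F ∧ Disjoint (evset e) (T ∪ S))
    (hss' : s ≠ s') (hTs : T ∩ H.cls s = {x}) (hTs' : T ∩ H.cls s' = {x'}) {R₀ : Finset α}
    (hrest : SaturatingR H (P.Rfam.erase R₀) (((P.W ∩ H.cls s) \ S) \ {x}))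
    (hR₀ : SaturatingR H {R₀} (((P.W ∩ H.cls s') \ S) \ {x'}))
    (hRT : ∀ R ∈ P.Rfam, Disjoint R T) :
    (H.delete (T ∪ S)).nu = H.nu := by
  refine hFR.nu_delete_union_eq_of_reroute hSW hF hss' hTs hTs'
    (by rwa [Finset.sdiff_singleton_eq_erase]) hR₀ (fun R hR d hd hdT => ?_)
    fun R hR d hd hdT => ?_
  exacts [absurd hdT (Finset.disjoint_left.1 (hRT R (Finset.mem_sdiff.1 hR).1) hd),
    absurd hdT (Finset.disjoint_left.1 (hRT R (Finset.mem_inter.1 hR).1) hd)]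

/-- `R₀` and `R₁` are matched into class `s'`, the other members of `𝓡` into class `s`. -/
theorem nu_delete_union_eq_of_reroute_pair (hFR : IsFRPartition H P) (hSW : S ⊆ P.W)
    (hF : ∀ F ∈ P.Ffam, ∃ e ∈ H.edges, evset e ⊆ F ∧ Disjoint (evset e) (T ∪ S))
    (hss' : s ≠ s') (hTs : T ∩ H.cls s = {x}) (hTs' : T ∩ H.cls s' = {x'})
    {R₀ R₁ : Finset α} (hR₀ : R₀ ∈ P.Rfam) (hR₁ : R₁ ∈ P.Rfam) (hxR₁ : x' ∈ R₁)
    (hrest : SaturatingR H (P.Rfam.erase R₀) (((P.W ∩ H.cls s) \ S) \ {x}))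
    (hsat : SaturatingR H P.Rfam ((P.W ∩ H.cls s') \ S))
    (hRT : ∀ R ∈ P.Rfam, ∀ d ∈ R, d ∈ T → d = x') :
    (H.delete (T ∪ S)).nu = H.nu := by
  refine hFR.nu_delete_union_eq_of_reroute hSW hF (U := {R₀, R₁}) hss' hTs hTs'
    (hrest.mono_left fun R hR => ?_) ((hsat.mono_left ?_).sdiff_singleton_of_notMem
      (hFR.notMem_W_of_mem_R hR₁ hxR₁))
    (fun R hR d hd hdT => ?_) fun R hR d hd hdT => hRT R (Finset.mem_inter.1 hR).1 d hd hdT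
  · obtain ⟨hRf, hRU⟩ := Finset.mem_sdiff.1 hR
    exact Finset.mem_erase.2 ⟨fun h => hRU (by simp [h]), hRf⟩
  · simp [Finset.insert_subset_iff, hR₀, hR₁]
  · obtain ⟨hRf, hRU⟩ := Finset.mem_sdiff.1 hR
    obtain rfl := hRT R hRf d hd hdT
    exact absurd (by simp [hFR.eq_of_mem_R hRf hR₁ hd hxR₁]) hRU

end IsFRPartition

theorem SaturatingR.erase_sdiff_of_essentialForIn {H : TriSys α} {P : FRData α} {S R₀ : Finset α}
    {a : α} {i : Fin 3} (h : SaturatingR H P.Rfam ((P.W ∩ H.cls i) \ S)) (hR₀ : R₀ ∈ P.Rfam)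
    (ha : a ∈ H.cls i) (haR₀ : EssentialForIn H P R₀ a) :
    SaturatingR H (P.Rfam.erase R₀) (((P.W ∩ H.cls i) \ S) \ {a}) := by
  obtain ⟨t, ht⟩ := haR₀
  have hat : a ∈ H.cls t :=
    (Finset.mem_inter.1 (mem_rnbhd_singleton.1 (ht ▸ Finset.mem_singleton_self a)).1).2
  obtain rfl := H.cls_eq_of_mem hat ha
  refine h.erase_sdiff_singleton hR₀ ?_
  rw [rnbhd_sdiff, ht]
  exact Finset.sdiff_subset

section Triple

variable {H : TriSys α} {P : FRData α} {S : Finset α} {a b c : α} {i j k : Fin 3}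

theorem TriSys.triple_inter_cls_eq_singleton (hij : i ≠ j) (hik : i ≠ k) (hjk : j ≠ k)
    (ha : a ∈ H.cls i) (hb : b ∈ H.cls j) (hc : c ∈ H.cls k) ⦃x : α⦄ ⦃s : Fin 3⦄
    (hx : x ∈ ({a, b, c} : Finset α)) (hxs : x ∈ H.cls s) :
    {a, b, c} ∩ H.cls s = {x} := by
  have hcls : ∀ {y}, y ∈ ({a, b, c} : Finset α) → y ∈ H.cls s →
      (y = a ∧ s = i) ∨ (y = b ∧ s = j) ∨ (y = c ∧ s = k) := by
    intro y hy hys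
    simp only [Finset.mem_insert, Finset.mem_singleton] at hy
    rcases hy with rfl | rfl | rfl
    exacts [Or.inl ⟨rfl, H.cls_eq_of_mem hys ha⟩, Or.inr (Or.inl ⟨rfl, H.cls_eq_of_mem hys hb⟩),
      Or.inr (Or.inr ⟨rfl, H.cls_eq_of_mem hys hc⟩)]
  refine Finset.Subset.antisymm (fun y hy => ?_)
    (Finset.singleton_subset_iff.2 (Finset.mem_inter.2 ⟨hx, hxs⟩))
  obtain ⟨hyT, hys⟩ := Finset.mem_inter.1 hy
  rw [Finset.mem_singleton]
  rcases hcls hyT hys with ⟨rfl, h⟩ | ⟨rfl, h⟩ | ⟨rfl, h⟩ <;>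
    rcases hcls hx hxs with ⟨rfl, h'⟩ | ⟨rfl, h'⟩ | ⟨rfl, h'⟩ <;>
    first | rfl | (exfalso; omega)

theorem eq_or_eq_or_eq_of_mem_triple_union {W : Finset α} {d : α} (hSW : S ⊆ W) (hd : d ∉ W)
    (hdD : d ∈ ({a, b, c} : Finset α) ∪ S) : d = a ∨ d = b ∨ d = c := by
  simp only [Finset.mem_union, Finset.mem_insert, Finset.mem_singleton] at hdD
  exact hdD.resolve_right fun hdS => hd (hSW hdS)

namespace IsFRPartition

theorem exists_edge_disjoint_triple_union (hFR : IsFRPartition H P) (hSW : S ⊆ P.W)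
    (hjk : j ≠ k) (hb : b ∈ H.cls j) (hc : c ∈ H.cls k) (ha : a ∉ famUnion P.Ffam) :
    ∀ F ∈ P.Ffam, ∃ e ∈ H.edges, evset e ⊆ F ∧ Disjoint (evset e) ({a, b, c} ∪ S) := by
  intro F hF
  refine (hFR.isMultiFano hF).exists_edge_disjoint hb hc hjk fun v hv => ?_
  obtain ⟨hvF, hvD⟩ := Finset.mem_inter.1 hv
  rcases eq_or_eq_or_eq_of_mem_triple_union hSW (hFR.notMem_W_of_mem_F hF hvF) hvD
    with rfl | rfl | rfl
  · exact absurd (mem_famUnion.2 ⟨F, hF, hvF⟩) ha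
  all_goals simp

theorem nu_delete_eq_of_mem_Ffam_of_mem_W (hFR : IsFRPartition H P) (hSW : S ⊆ P.W)
    (hsat : ∀ s, SaturatingR H P.Rfam ((P.W ∩ H.cls s) \ S))
    (hij : i ≠ j) (hik : i ≠ k) (hjk : j ≠ k)
    (ha : a ∈ H.cls i) (hb : b ∈ H.cls j) (hc : c ∈ H.cls k)
    (haF : a ∈ famUnion P.Ffam) (hbW : b ∈ P.W) :
    (H.delete ({a, b, c} ∪ S)).nu = H.nu := by
  obtain ⟨Fa, hFa, haFa⟩ := mem_famUnion.1 haF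
  have hT := TriSys.triple_inter_cls_eq_singleton hij hik hjk ha hb hc
  have hF : ∀ F ∈ P.Ffam, ∃ e ∈ H.edges, evset e ⊆ F ∧ Disjoint (evset e) ({a, b, c} ∪ S) := by
    rw [Finset.insert_comm]
    refine hFR.exists_edge_disjoint_triple_union hSW hik ha hc fun hbF => ?_
    obtain ⟨F, hF, hbF⟩ := mem_famUnion.1 hbF
    exact hFR.notMem_W_of_mem_F hF hbF hbW
  refine hFR.nu_delete_union_eq_of_reroute_filter hSW hF hik (hT (by simp) ha) (hT (by simp) hc)
    ((hsat i).sdiff_singleton_of_notMem (hFR.notMem_W_of_mem_F hFa haFa)) (hsat k) ?_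
  intro R hR d hd hdT
  simp only [Finset.mem_insert, Finset.mem_singleton] at hdT
  rcases hdT with rfl | rfl | rfl
  exacts [absurd hd (hFR.notMem_R_of_mem_F hFa hR haFa),
    absurd hbW (hFR.notMem_W_of_mem_R hR hd), rfl]

theorem nu_delete_eq_of_mem_Rfam (hFR : IsFRPartition H P) (hSW : S ⊆ P.W)
    (hsat : ∀ s, SaturatingR H P.Rfam ((P.W ∩ H.cls s) \ S))
    (hij : i ≠ j) (hik : i ≠ k) (hjk : j ≠ k)
    (ha : a ∈ H.cls i) (hb : b ∈ H.cls j) (hc : c ∈ H.cls k)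
    {R₀ : Finset α} (hR₀ : R₀ ∈ P.Rfam) (haR₀ : a ∈ R₀) (hbR₀ : b ∉ R₀)
    (hcR : c ∉ famUnion P.Rfam) :
    (H.delete ({a, b, c} ∪ S)).nu = H.nu := by
  have hT := TriSys.triple_inter_cls_eq_singleton hij hik hjk ha hb hc
  have hF := hFR.exists_edge_disjoint_triple_union hSW hjk hb hc (S := S) fun haF => by
    obtain ⟨F, hF, haF⟩ := mem_famUnion.1 haF
    exact hFR.notMem_R_of_mem_F hF hR₀ haF haR₀
  refine hFR.nu_delete_union_eq_of_reroute hSW hF (U := P.Rfam.filter (b ∈ ·)) hij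
    (hT (by simp) ha) (hT (by simp) hb)
    (((hsat i).mono_left Finset.sdiff_subset).sdiff_singleton_of_notMem
      (hFR.notMem_W_of_mem_R hR₀ haR₀))
    (hFR.saturatingR_filter_mem_sdiff (hsat j) b) ?_ ?_
  · intro R hR d hd hdT
    obtain ⟨hRf, hbR⟩ := Finset.mem_sdiff.1 hR
    simp only [Finset.mem_insert, Finset.mem_singleton] at hdT
    rcases hdT with rfl | rfl | rfl
    exacts [rfl, absurd (Finset.mem_filter.2 ⟨hRf, hd⟩) hbR,
      absurd (mem_famUnion.2 ⟨R, hRf, hd⟩) hcR]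
  · intro R hR d hd hdT
    obtain ⟨hRf, hbR⟩ := Finset.mem_filter.1 (Finset.mem_inter.1 hR).2
    simp only [Finset.mem_insert, Finset.mem_singleton] at hdT
    rcases hdT with rfl | rfl | rfl
    exacts [absurd (hFR.eq_of_mem_R hRf hR₀ hd haR₀ ▸ hbR) hbR₀, rfl,
      absurd (mem_famUnion.2 ⟨R, hRf, hd⟩) hcR]

theorem nu_delete_eq_of_essentialForIn (hFR : IsFRPartition H P) (hSW : S ⊆ P.W)
    (hsat : ∀ s, SaturatingR H P.Rfam ((P.W ∩ H.cls s) \ S))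
    (hij : i ≠ j) (hik : i ≠ k) (hjk : j ≠ k)
    (ha : a ∈ H.cls i) (hb : b ∈ H.cls j) (hc : c ∈ H.cls k)
    {R₀ : Finset α} (hR₀ : R₀ ∈ P.Rfam) (haW : a ∈ P.W) (haR₀ : EssentialForIn H P R₀ a)
    (hbR₀ : ¬EssentialForIn (H.delete S) ⟨P.Ffam, P.Rfam, P.W \ S⟩ R₀ b)
    (hcR : c ∉ famUnion P.Rfam) :
    (H.delete ({a, b, c} ∪ S)).nu = H.nu := by
  have hT := TriSys.triple_inter_cls_eq_singleton hij hik hjk ha hb hc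
  have hF := hFR.exists_edge_disjoint_triple_union hSW hjk hb hc (S := S) fun haF => by
    obtain ⟨F, hF, haF⟩ := mem_famUnion.1 haF
    exact hFR.notMem_W_of_mem_F hF haF haW
  have hRT : ∀ R ∈ P.Rfam, ∀ d ∈ R, d ∈ ({a, b, c} : Finset α) → d = b := by
    intro R hR d hd hdT
    simp only [Finset.mem_insert, Finset.mem_singleton] at hdT
    rcases hdT with rfl | rfl | rfl
    exacts [absurd haW (hFR.notMem_W_of_mem_R hR hd), rfl,
      absurd (mem_famUnion.2 ⟨R, hR, hd⟩) hcR]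
  have hrest := (hsat i).erase_sdiff_of_essentialForIn hR₀ ha haR₀
  by_cases hbR : b ∈ famUnion P.Rfam
  · obtain ⟨R₁, hR₁, hbR₁⟩ := mem_famUnion.1 hbR
    exact hFR.nu_delete_union_eq_of_reroute_pair hSW hF hij (hT (by simp) ha) (hT (by simp) hb)
      hR₀ hR₁ hbR₁ hrest (hsat j) hRT
  · refine hFR.nu_delete_union_eq_of_reroute_singleton hSW hF hij (hT (by simp) ha)
      (hT (by simp) hb) hrest ((hsat j).singleton_sdiff_singleton hR₀ fun h =>
        hbR₀ ((hFR.essentialForIn_delete_iff hSW hR₀).2 ⟨j, h⟩))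
      fun R hR => Finset.disjoint_left.2 fun d hd hdT => hbR ?_
    exact mem_famUnion.2 ⟨R, hR, hRT R hR d hd hdT ▸ hd⟩

theorem nu_delete_eq_of_not_essentialVertIn (hFR : IsFRPartition H P) (hSW : S ⊆ P.W)
    (hsat : ∀ s, SaturatingR H P.Rfam ((P.W ∩ H.cls s) \ S))
    (hij : i ≠ j) (hik : i ≠ k) (hjk : j ≠ k)
    (ha : a ∈ H.cls i) (hb : b ∈ H.cls j) (hc : c ∈ H.cls k) (haW : a ∈ P.W)
    (haE : ¬EssentialVertIn (H.delete S) ⟨P.Ffam, P.Rfam, P.W \ S⟩ a)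
    (hbR : b ∉ famUnion P.Rfam) :
    (H.delete ({a, b, c} ∪ S)).nu = H.nu := by
  have hT := TriSys.triple_inter_cls_eq_singleton hij hik hjk ha hb hc
  have hF := hFR.exists_edge_disjoint_triple_union hSW hjk hb hc (S := S) fun haF => by
    obtain ⟨F, hF, haF⟩ := mem_famUnion.1 haF
    exact hFR.notMem_W_of_mem_F hF haF haW
  have hRT : ∀ R ∈ P.Rfam, ∀ d ∈ R, d ∈ ({a, b, c} : Finset α) → d = c := by
    intro R hR d hd hdT
    simp only [Finset.mem_insert, Finset.mem_singleton] at hdT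
    rcases hdT with rfl | rfl | rfl
    exacts [absurd haW (hFR.notMem_W_of_mem_R hR hd),
      absurd (mem_famUnion.2 ⟨R, hR, hd⟩) hbR, rfl]
  rcases (hsat i).sdiff_singleton_or_exists_erase fun h =>
      haE ((hFR.essentialVertIn_delete_iff hSW).2 ⟨i, h⟩) with hrest | ⟨U, hU, hU2, hdrop⟩
  · exact hFR.nu_delete_union_eq_of_reroute_filter hSW hF hik (hT (by simp) ha)
      (hT (by simp) hc) hrest (hsat k) hRT
  obtain ⟨R', hR'U, hR'⟩ := (hsat j).exists_singleton_sdiff_singleton hU hU2 b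
  by_cases hcR : c ∈ famUnion P.Rfam
  · obtain ⟨Rc, hRc, hcRc⟩ := mem_famUnion.1 hcR
    exact hFR.nu_delete_union_eq_of_reroute_pair hSW hF hik (hT (by simp) ha) (hT (by simp) hc)
      (hU hR'U) hRc hcRc (hdrop R' hR'U) (hsat k) hRT
  · refine hFR.nu_delete_union_eq_of_reroute_singleton hSW hF hij (hT (by simp) ha)
      (hT (by simp) hb) (hdrop R' hR'U) hR'
      fun R hR => Finset.disjoint_left.2 fun d hd hdT => hcR ?_
    exact mem_famUnion.2 ⟨R, hR, hRT R hR d hd hdT ▸ hd⟩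

end IsFRPartition

end Triple

/-- **Corollary of the monster lemma.** Under any of the four listed cases on
`a, b, c`, deleting `{a, b, c}` together with a set `S` of superfluous
vertices (at most one per class) does not change the matching number. -/
theorem monster_corollary (H : TriSys α) (P : FRData α)
    (hFR : IsFRPartition H P) (hM : IsMatchable H P)
    (a b c : α)
    (habc : ∃ i j k : Fin 3, i ≠ j ∧ i ≠ k ∧ j ≠ k ∧
      a ∈ H.cls i ∧ b ∈ H.cls j ∧ c ∈ H.cls k)
    (S : Finset α) (hSW : S ⊆ P.W)
    (hSsup : ∀ s ∈ S, SuperfluousVert H P s)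
    (hSone : ∀ i : Fin 3, (S ∩ H.cls i).card ≤ 1)
    (hcase :
      (a ∈ famUnion P.Ffam ∧ b ∈ P.W) ∨
      (∃ R ∈ P.Rfam, a ∈ R ∧ b ∉ R ∧ c ∉ famUnion P.Rfam) ∨
      (∃ R ∈ P.Rfam, a ∈ P.W ∧ EssentialForIn H P R a ∧
        ¬ EssentialForIn (H.delete S) ⟨P.Ffam, P.Rfam, P.W \ S⟩ R b ∧
        c ∉ famUnion P.Rfam) ∨
      (a ∈ P.W ∧
        ¬ EssentialVertIn (H.delete S) ⟨P.Ffam, P.Rfam, P.W \ S⟩ a ∧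
        b ∉ famUnion P.Rfam)) :
    (H.delete ({a, b, c} ∪ S)).nu = H.nu := by
  obtain ⟨i, j, k, hij, hik, hjk, ha, hb, hc⟩ := habc
  have hsat := hM.saturatingR_sdiff hSsup hSone
  rcases hcase with ⟨haF, hbW⟩ | ⟨R₀, hR₀, haR₀, hbR₀, hcR⟩ |
      ⟨R₀, hR₀, haW, haR₀, hbR₀, hcR⟩ | ⟨haW, haE, hbR⟩
  · exact hFR.nu_delete_eq_of_mem_Ffam_of_mem_W hSW hsat hij hik hjk ha hb hc haF hbW
  · exact hFR.nu_delete_eq_of_mem_Rfam hSW hsat hij hik hjk ha hb hc hR₀ haR₀ hbR₀ hcR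
  · exact hFR.nu_delete_eq_of_essentialForIn hSW hsat hij hik hjk ha hb hc hR₀ haW haR₀
      hbR₀ hcR
  · exact hFR.nu_delete_eq_of_not_essentialVertIn hSW hsat hij hik hjk ha hb hc haW haE
      hbR
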